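/- For all integers c, p and k with c ≥ 1, p ≥ 2(8+c)^{c+1} − 1 and k = p − c, we have g^k_{k−1}(p) = p + 1; in particular, every Gallai-(p−c)-coloring of K_{p+1} contains a set of p vertices spanning edges in at most p−c−1 colors. -/
import Mathlib

open Finset

/-- A Gallai coloring: a symmetric edge-coloring of the complete graph on `V`
with no rainbow triangle. -/
def IsGallai {V β : Type*} (c : V → V → β) : Prop :=
  (∀ a b, c a b = c b a) ∧
  ∀ a b d : V, a ≠ b → a ≠ d → b ≠ d →
    ¬(c a b ≠ c a d ∧ c a b ≠ c b d ∧ c a d ≠ c b d)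

/-- The set of colors appearing on edges inside the vertex set `S`. -/
def colorsOn {V β : Type*} [DecidableEq V] [DecidableEq β]
    (c : V → V → β) (S : Finset V) : Finset β :=
  ((S ×ˢ S).filter fun p => p.1 ≠ p.2).image fun p => c p.1 p.2

/-- `gallaiNum k q p` is the smallest positive `n` such that every Gallai-`k`-coloring
of `K_n` contains a set of `p` vertices whose induced edges use at most `q` colors. -/
noncomputable def gallaiNum (k q p : ℕ) : ℕ :=
  sInf {n : ℕ | 0 < n ∧ ∀ c : Fin n → Fin n → Fin k, IsGallai c →
    ∃ S : Finset (Fin n), S.card = p ∧ (colorsOn c S).card ≤ q}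

section Support

variable {V β : Type*} [DecidableEq V] [DecidableEq β]

lemma mem_colorsOn {χ : V → V → β} {S : Finset V} {x : β} :
    x ∈ colorsOn χ S ↔ ∃ a ∈ S, ∃ b ∈ S, a ≠ b ∧ χ a b = x := by
  constructor
  · intro h
    simp only [colorsOn, Finset.mem_image, Finset.mem_filter, Finset.mem_product] at h
    obtain ⟨q, ⟨⟨hq1, hq2⟩, hne⟩, heq⟩ := h
    exact ⟨q.1, hq1, q.2, hq2, hne, heq⟩
  · rintro ⟨a, ha, b, hb, hab, heq⟩
    simp only [colorsOn, Finset.mem_image, Finset.mem_filter, Finset.mem_product]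
    exact ⟨(a, b), ⟨⟨ha, hb⟩, hab⟩, heq⟩

lemma colorsOn_mono {χ : V → V → β} {S S' : Finset V} (h : S ⊆ S') :
    colorsOn χ S ⊆ colorsOn χ S' := by
  intro x hx
  obtain ⟨a, ha, b, hb, hab, heq⟩ := mem_colorsOn.mp hx
  exact mem_colorsOn.mpr ⟨a, h ha, b, h hb, hab, heq⟩

/-- the color `x` is a "star" on `S`: some vertex meets all `x`-colored edges. -/
def isStarOn (χ : V → V → β) (S : Finset V) (x : β) : Prop :=
  ∃ v ∈ S, ∀ a ∈ S, ∀ b ∈ S, a ≠ b → χ a b = x → a = v ∨ b = v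

/-- the set of star colors on `S`. -/
noncomputable def starsOn (χ : V → V → β) (S : Finset V) : Finset β :=
  @Finset.filter _ (isStarOn χ S) (Classical.decPred _) (colorsOn χ S)

lemma mem_starsOn {χ : V → V → β} {S : Finset V} {x : β} :
    x ∈ starsOn χ S ↔ x ∈ colorsOn χ S ∧ isStarOn χ S x := by
  unfold starsOn
  exact @Finset.mem_filter _ _ (Classical.decPred _) _ _

lemma starsOn_subset {χ : V → V → β} {S : Finset V} : starsOn χ S ⊆ colorsOn χ S :=
  fun _ hx => (mem_starsOn.mp hx).1

lemma sum_card_filter_comm {α γ : Type*} (R : Finset α) (C : Finset γ) (P : α → γ → Prop)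
    [∀ a b, Decidable (P a b)] :
    ∑ a ∈ R, (C.filter (fun b => P a b)).card = ∑ b ∈ C, (R.filter (fun a => P a b)).card := by
  simp only [Finset.card_filter]
  exact Finset.sum_comm

/-- the tournament "loser" lemma: a total, asymmetric, transitive relation on a
nonempty finite set has a bottom element. -/
lemma exists_loser {α : Type*} [DecidableEq α] (beats : α → α → Prop) :
    ∀ R : Finset α, R.Nonempty →
    (∀ i ∈ R, ∀ j ∈ R, i ≠ j → beats i j ∨ beats j i) →
    (∀ i ∈ R, ∀ j ∈ R, i ≠ j → beats i j → ¬ beats j i) →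
    (∀ i ∈ R, ∀ j ∈ R, ∀ k ∈ R, i ≠ j → j ≠ k → i ≠ k → beats i j → beats j k → beats i k) →
    ∃ l ∈ R, ∀ i ∈ R, i ≠ l → beats i l := by
  intro R
  induction R using Finset.induction_on with
  | empty => rintro ⟨x, hx⟩; exact absurd hx (Finset.notMem_empty x)
  | @insert a s ha IH =>
    intro _ htot hasym htrans
    have hsubset : s ⊆ insert a s := Finset.subset_insert a s
    by_cases hs : s.Nonempty
    · obtain ⟨l, hl, hlos⟩ := IH hs
        (fun i hi j hj => htot i (hsubset hi) j (hsubset hj))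
        (fun i hi j hj => hasym i (hsubset hi) j (hsubset hj))
        (fun i hi j hj k hk => htrans i (hsubset hi) j (hsubset hj) k (hsubset hk))
      have hal : a ≠ l := fun h => ha (h ▸ hl)
      rcases htot a (Finset.mem_insert_self a s) l (hsubset hl) hal with hba | hlb
      · refine ⟨l, hsubset hl, ?_⟩
        intro i hi hil
        rcases Finset.mem_insert.mp hi with rfl | his
        · exact hba
        · exact hlos i his hil
      · refine ⟨a, Finset.mem_insert_self a s, ?_⟩
        intro i hi hia
        rcases Finset.mem_insert.mp hi with rfl | his
        · exact absurd rfl hia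
        · by_cases hil : i = l
          · subst hil; exact hlb
          · have hbil := hlos i his hil
            rcases htot i (hsubset his) a (Finset.mem_insert_self a s) hia with h | h
            · exact h
            · exfalso
              have hax : a ≠ i := Ne.symm hia
              have hbal : beats a l :=
                htrans a (Finset.mem_insert_self a s) i (hsubset his) l (hsubset hl)
                  hax hil hal h hbil
              exact hasym l (hsubset hl) a (Finset.mem_insert_self a s) (Ne.symm hal) hlb hbal
    · rw [Finset.not_nonempty_iff_eq_empty] at hs
      subst hs
      refine ⟨a, Finset.mem_insert_self a _, ?_⟩
      intro i hi hia
      rcases Finset.mem_insert.mp hi with rfl | his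
      · exact absurd rfl hia
      · exact absurd his (Finset.notMem_empty i)

end Support

section Main

variable {V β : Type*} [DecidableEq V] [DecidableEq β]


/-- Main counting lemma: in a Gallai coloring of a complete graph on `n ≥ 2` vertices,
`4·(#colors) + 4 ≤ 3·n + 2·(#star colors)`. -/
theorem gallai_star_bound (χ : V → V → β) (hg : IsGallai χ) :
    ∀ n : ℕ, ∀ S : Finset V, S.card = n → 2 ≤ n →
      4 * (colorsOn χ S).card + 4 ≤ 3 * n + 2 * (starsOn χ S).card := by
  intro n
  induction n using Nat.strong_induction_on with
  | _ n IH =>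
  intro S hScard hn
  classical
  have hSne : S.Nonempty := Finset.card_pos.mp (by omega)
  obtain ⟨v, hv⟩ := hSne
  set T := S.erase v with hTdef
  have hTcard : T.card + 1 = n := by
    rw [hTdef, Finset.card_erase_of_mem hv]; omega
  set R := T.image (fun w => χ v w) with hRdef
  set A : β → Finset V := fun x => T.filter (fun w => χ v w = x) with hAdef
  -- basic facts
  have hAsubT : ∀ x, A x ⊆ T := fun x => Finset.filter_subset _ _
  have hAsubS : ∀ x, A x ⊆ S := fun x => (hAsubT x).trans (Finset.erase_subset _ _)
  have hTv : ∀ w ∈ T, w ≠ v := fun w hw => Finset.ne_of_mem_erase hw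
  have hTS : ∀ w ∈ T, w ∈ S := fun w hw => Finset.mem_of_mem_erase hw
  have hmemA : ∀ w ∈ T, w ∈ A (χ v w) := fun w hw => Finset.mem_filter.mpr ⟨hw, rfl⟩
  have hAmem : ∀ x, ∀ w ∈ A x, χ v w = x ∧ w ∈ T := by
    intro x w hw
    have := Finset.mem_filter.mp hw
    exact ⟨this.2, this.1⟩
  have hRmem : ∀ x ∈ R, ∃ w ∈ T, χ v w = x := fun x hx => Finset.mem_image.mp hx
  have hRne : ∀ x ∈ R, (A x).Nonempty := by
    intro x hx
    obtain ⟨w, hw, hwx⟩ := hRmem x hx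
    exact ⟨w, Finset.mem_filter.mpr ⟨hw, hwx⟩⟩
  have hRof : ∀ w ∈ T, χ v w ∈ R := fun w hw => Finset.mem_image_of_mem _ hw
  have hTsum : T.card = ∑ x ∈ R, (A x).card :=
    Finset.card_eq_sum_card_fiberwise hRof
  have hRcardpos : 1 ≤ R.card := by
    have : (T.image (fun w => χ v w)).Nonempty := by
      apply Finset.Nonempty.image
      rw [← Finset.card_pos]; omega
    rw [hRdef]
    exact Finset.card_pos.mpr this
  -- between-parts edges get one of the endpoint colors
  have hbet : ∀ a ∈ T, ∀ b ∈ T, χ v a ≠ χ v b → χ a b = χ v a ∨ χ a b = χ v b := by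
    intro a ha b hb hne
    have hav : a ≠ v := hTv a ha
    have hbv : b ≠ v := hTv b hb
    have hab : a ≠ b := fun h => hne (by rw [h])
    have h2 := hg.2 v a b (Ne.symm hav) (Ne.symm hbv) hab
    by_contra hcon
    push_neg at hcon
    exact h2 ⟨hne, fun h => hcon.1 h.symm, fun h => hcon.2 h.symm⟩
  -- the colors at v are colors of S
  have hRsubC : R ⊆ colorsOn χ S := by
    intro x hx
    obtain ⟨w, hw, hwx⟩ := hRmem x hx
    exact mem_colorsOn.mpr ⟨v, hv, w, hTS w hw, Ne.symm (hTv w hw), hwx⟩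
  set C := colorsOn χ S with hCdef
  set I := C \ R with hIdef
  have hInotR : ∀ y ∈ I, y ∉ R := fun y hy => (Finset.mem_sdiff.mp hy).2
  have hIC : ∀ y ∈ I, y ∈ C := fun y hy => (Finset.mem_sdiff.mp hy).1
  have hUnion : R ∪ I = C := Finset.union_sdiff_of_subset hRsubC
  have hdisj : Disjoint R I := Finset.disjoint_sdiff
  have hCcard : C.card = R.card + I.card := by
    rw [← hUnion, Finset.card_union_of_disjoint hdisj]
  -- same-part edges give internal colors
  have hsamepart : ∀ a ∈ T, ∀ b ∈ T, a ≠ b → χ v a = χ v b →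
      χ a b ∈ colorsOn χ (A (χ v a)) := by
    intro a ha b hb hab hsame
    exact mem_colorsOn.mpr ⟨a, hmemA a ha, b, Finset.mem_filter.mpr ⟨hb, hsame.symm⟩, hab, rfl⟩
  -- multiplicity functions
  set mm : β → ℕ := fun y => (R.filter (fun x => y ∈ colorsOn χ (A x))).card with hmmdef
  set ss : β → ℕ := fun y => (R.filter (fun x => y ∈ starsOn χ (A x))).card with hssdef
  have hsm : ∀ y, ss y ≤ mm y := by
    intro y
    apply Finset.card_le_card
    intro x hx
    have := Finset.mem_filter.mp hx
    exact Finset.mem_filter.mpr ⟨this.1, starsOn_subset this.2⟩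
  have hmmpos : ∀ y x, x ∈ R → y ∈ colorsOn χ (A x) → 1 ≤ mm y := by
    intro y x hx hmem
    apply Finset.card_pos.mpr
    exact ⟨x, Finset.mem_filter.mpr ⟨hx, hmem⟩⟩
  -- edges of colors not in R are internal to a single part
  have hIloc : ∀ y, y ∉ R → ∀ a ∈ S, ∀ b ∈ S, a ≠ b → χ a b = y →
      a ∈ T ∧ b ∈ T ∧ χ v a = χ v b := by
    intro y hyR a ha b hb hab hcab
    have hav : a ≠ v := by
      rintro rfl
      have hbT : b ∈ T := Finset.mem_erase.mpr ⟨Ne.symm hab, hb⟩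
      exact hyR (hcab ▸ hRof b hbT)
    have hbv : b ≠ v := by
      intro hbeq
      have haT : a ∈ T := Finset.mem_erase.mpr ⟨hav, ha⟩
      have hy : χ v a = y := by rw [hg.1 v a, ← hbeq]; exact hcab
      exact hyR (hy ▸ hRof a haT)
    have haT : a ∈ T := Finset.mem_erase.mpr ⟨hav, ha⟩
    have hbT : b ∈ T := Finset.mem_erase.mpr ⟨hbv, hb⟩
    refine ⟨haT, hbT, ?_⟩
    by_contra hsame
    rcases hbet a haT b hbT hsame with h | h
    · exact hyR (hcab ▸ h ▸ hRof a haT)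
    · exact hyR (hcab ▸ h ▸ hRof b hbT)
  -- part-wise induction hypothesis
  have hIH : ∀ x ∈ R, 4 * (colorsOn χ (A x)).card + 3 + (if 2 ≤ (A x).card then 1 else 0)
      ≤ 3 * (A x).card + 2 * (starsOn χ (A x)).card := by
    intro x hx
    by_cases h2 : 2 ≤ (A x).card
    · have hlt : (A x).card < n := by
        have := Finset.card_le_card (hAsubT x)
        omega
      have := IH (A x).card hlt (A x) rfl h2
      simp only [h2, if_true]
      omega
    · have h1 : (A x).card = 1 := by
        have := Finset.card_pos.mpr (hRne x hx)
        omega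
      have hcol0 : colorsOn χ (A x) = ∅ := by
        obtain ⟨w, hw⟩ := Finset.card_eq_one.mp h1
        apply Finset.eq_empty_of_forall_notMem
        intro y hy
        obtain ⟨a, ha, b, hb, hab, _⟩ := mem_colorsOn.mp hy
        rw [hw, Finset.mem_singleton] at ha hb
        exact hab (ha.trans hb.symm)
      rw [if_neg h2, hcol0, h1]
      simp
  have hIHsum : 4 * (∑ x ∈ R, (colorsOn χ (A x)).card) + 3 * R.card
      + (∑ x ∈ R, if 2 ≤ (A x).card then 1 else 0)
      ≤ 3 * T.card + 2 * (∑ x ∈ R, (starsOn χ (A x)).card) := by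
    have h := Finset.sum_le_sum hIH
    rw [Finset.sum_add_distrib, Finset.sum_add_distrib, Finset.sum_add_distrib,
      ← Finset.mul_sum, ← Finset.mul_sum, ← Finset.mul_sum, Finset.sum_const,
      smul_eq_mul, mul_comm R.card 3] at h
    rw [hTsum]
    omega
  -- double counting
  have hsubCpart : ∀ x ∈ R, colorsOn χ (A x) ⊆ C := fun x _ => colorsOn_mono (hAsubS x)
  have hM : ∑ x ∈ R, (colorsOn χ (A x)).card = ∑ y ∈ C, mm y := by
    rw [hmmdef]
    rw [← sum_card_filter_comm R C (fun x y => y ∈ colorsOn χ (A x))]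
    apply Finset.sum_congr rfl
    intro x hx
    congr 1
    rw [Finset.filter_mem_eq_inter, Finset.inter_eq_right.mpr (hsubCpart x hx)]
  have hS2 : ∑ x ∈ R, (starsOn χ (A x)).card = ∑ y ∈ C, ss y := by
    rw [hssdef]
    rw [← sum_card_filter_comm R C (fun x y => y ∈ starsOn χ (A x))]
    apply Finset.sum_congr rfl
    intro x hx
    congr 1
    rw [Finset.filter_mem_eq_inter,
      Finset.inter_eq_right.mpr ((starsOn_subset).trans (hsubCpart x hx))]
  -- a color at v with a singleton part and no internal occurrence is a star
  have hstar1 : ∀ x ∈ R, mm x = 0 → (A x).card = 1 → x ∈ starsOn χ S := by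
    intro x hx hm h1
    obtain ⟨w, hw⟩ := Finset.card_eq_one.mp h1
    have hwA : w ∈ A x := by rw [hw]; exact Finset.mem_singleton_self w
    refine mem_starsOn.mpr ⟨hRsubC hx, w, hAsubS x hwA, ?_⟩
    intro a ha b hb hab hcab
    by_cases hav : a = v
    · right
      subst hav
      have hbT : b ∈ T := Finset.mem_erase.mpr ⟨Ne.symm hab, hb⟩
      have : b ∈ A x := Finset.mem_filter.mpr ⟨hbT, hcab⟩
      rw [hw, Finset.mem_singleton] at this
      exact this
    · by_cases hbv : b = v
      · left
        have haT : a ∈ T := Finset.mem_erase.mpr ⟨hav, ha⟩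
        have hxa : χ v a = x := by rw [hg.1 v a, ← hbv]; exact hcab
        have : a ∈ A x := Finset.mem_filter.mpr ⟨haT, hxa⟩
        rw [hw, Finset.mem_singleton] at this
        exact this
      · have haT : a ∈ T := Finset.mem_erase.mpr ⟨hav, ha⟩
        have hbT : b ∈ T := Finset.mem_erase.mpr ⟨hbv, hb⟩
        by_cases hsame : χ v a = χ v b
        · exfalso
          have hmem := hsamepart a haT b hbT hab hsame
          rw [hcab] at hmem
          have := hmmpos x (χ v a) (hRof a haT) hmem
          omega
        · rcases hbet a haT b hbT hsame with h | h
          · left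
            have hxa : χ v a = x := by rw [← h]; exact hcab
            have : a ∈ A x := Finset.mem_filter.mpr ⟨haT, hxa⟩
            rw [hw, Finset.mem_singleton] at this
            exact this
          · right
            have hxb : χ v b = x := by rw [← h]; exact hcab
            have : b ∈ A x := Finset.mem_filter.mpr ⟨hbT, hxb⟩
            rw [hw, Finset.mem_singleton] at this
            exact this
  -- every color not at v appears inside some part
  have hmI : ∀ y ∈ I, 1 ≤ mm y := by
    intro y hy
    obtain ⟨a, ha, b, hb, hab, hcab⟩ := mem_colorsOn.mp (hIC y hy)
    obtain ⟨haT, hbT, hsame⟩ := hIloc y (hInotR y hy) a ha b hb hab hcab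
    have hmem := hsamepart a haT b hbT hab hsame
    rw [hcab] at hmem
    exact hmmpos y (χ v a) (hRof a haT) hmem
  -- an internal-only color which is a star in its unique part is a global star
  have hstarI : ∀ y ∈ I, mm y = 1 → ss y = 1 → y ∈ starsOn χ S := by
    intro y hy hm1 hs1
    obtain ⟨j0, hj0⟩ := Finset.card_eq_one.mp hs1
    have hj0mem : j0 ∈ R.filter (fun x => y ∈ starsOn χ (A x)) := by
      rw [hj0]; exact Finset.mem_singleton_self j0
    have hj0R : j0 ∈ R := (Finset.mem_filter.mp hj0mem).1
    have hyst : y ∈ starsOn χ (A j0) := (Finset.mem_filter.mp hj0mem).2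
    have hmfil : R.filter (fun x => y ∈ colorsOn χ (A x)) = {j0} := by
      apply Finset.eq_singleton_iff_unique_mem.mpr
      constructor
      · exact Finset.mem_filter.mpr ⟨hj0R, starsOn_subset hyst⟩
      · intro z hz
        by_contra hzj
        have hcard2 : 2 ≤ mm y := by
          rw [hmmdef]
          have : {z, j0} ⊆ R.filter (fun x => y ∈ colorsOn χ (A x)) := by
            intro u hu
            rcases Finset.mem_insert.mp hu with rfl | hu2
            · exact hz
            · rw [Finset.mem_singleton] at hu2
              subst hu2
              exact Finset.mem_filter.mpr ⟨hj0R, starsOn_subset hyst⟩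
          have := Finset.card_le_card this
          rwa [Finset.card_insert_of_notMem (by simp [hzj]), Finset.card_singleton] at this
        omega
    obtain ⟨w, hwA, hcov⟩ := (mem_starsOn.mp hyst).2
    refine mem_starsOn.mpr ⟨hIC y hy, w, hAsubS j0 hwA, ?_⟩
    intro a ha b hb hab hcab
    obtain ⟨haT, hbT, hsame⟩ := hIloc y (hInotR y hy) a ha b hb hab hcab
    have hmem := hsamepart a haT b hbT hab hsame
    rw [hcab] at hmem
    have : χ v a ∈ R.filter (fun x => y ∈ colorsOn χ (A x)) :=
      Finset.mem_filter.mpr ⟨hRof a haT, hmem⟩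
    rw [hmfil, Finset.mem_singleton] at this
    have haA : a ∈ A j0 := by rw [← this]; exact hmemA a haT
    have hbA : b ∈ A j0 := by
      rw [← this]
      exact Finset.mem_filter.mpr ⟨hbT, hsame.symm⟩
    exact hcov a haA b hbA hab hcab
  -- pointwise inequality for internal-only colors
  have hIpt : ∀ y ∈ I, 4 + 2 * ss y ≤ (if y ∈ starsOn χ S then 2 else 0) + 4 * mm y := by
    intro y hy
    have h1 := hmI y hy
    have h2 := hsm y
    by_cases hm2 : 2 ≤ mm y
    · split_ifs <;> omega
    · have hm1 : mm y = 1 := by omega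
      by_cases hs0 : ss y = 0
      · split_ifs <;> omega
      · have hs1 : ss y = 1 := by omega
        have := hstarI y hy hm1 hs1
        rw [if_pos this]
        omega
  have hIsum : 4 * I.card + 2 * (∑ y ∈ I, ss y)
      ≤ 2 * (I.filter (fun y => y ∈ starsOn χ S)).card + 4 * (∑ y ∈ I, mm y) := by
    have h := Finset.sum_le_sum hIpt
    rw [Finset.sum_add_distrib, Finset.sum_add_distrib, ← Finset.mul_sum, ← Finset.mul_sum,
      Finset.sum_const, smul_eq_mul, mul_comm I.card 4] at h
    have hb : (∑ y ∈ I, if y ∈ starsOn χ S then 2 else 0)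
        = 2 * (I.filter (fun y => y ∈ starsOn χ S)).card := by
      rw [Finset.card_filter, Finset.mul_sum]
      apply Finset.sum_congr rfl
      intro y _
      split_ifs <;> simp
    rw [hb] at h
    omega
  -- pointwise inequality for colors at v
  have hRpt : ∀ x ∈ R, 1 + 2 * ss x ≤ (if 2 ≤ (A x).card then 1 else 0)
      + (if x ∈ starsOn χ S then 2 else 0) + 4 * mm x := by
    intro x hx
    have h2 := hsm x
    by_cases hm : 1 ≤ mm x
    · split_ifs <;> omega
    · have hm0 : mm x = 0 := by omega
      have hs0 : ss x = 0 := by omega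
      by_cases hA2 : 2 ≤ (A x).card
      · rw [if_pos hA2]
        split_ifs <;> omega
      · have h1 : (A x).card = 1 := by
          have := Finset.card_pos.mpr (hRne x hx)
          omega
        have := hstar1 x hx hm0 h1
        rw [if_pos this]
        split_ifs
        omega
  -- the key extra unit: some color at v has slack
  have hwitness : ∃ x₀ ∈ R, 2 + 2 * ss x₀ ≤ (if 2 ≤ (A x₀).card then 1 else 0)
      + (if x₀ ∈ starsOn χ S then 2 else 0) + 4 * mm x₀ := by
    by_cases hcase : ∃ x ∈ R, 1 ≤ mm x ∨ (A x).card = 1 ∨ x ∈ starsOn χ S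
    · obtain ⟨x, hx, hor⟩ := hcase
      refine ⟨x, hx, ?_⟩
      have h2 := hsm x
      by_cases hm : 1 ≤ mm x
      · split_ifs <;> omega
      · have hm0 : mm x = 0 := by omega
        have hs0 : ss x = 0 := by omega
        rcases hor with h | h | h
        · omega
        · have := hstar1 x hx hm0 h
          rw [if_pos this]
          split_ifs <;> omega
        · rw [if_pos h]
          split_ifs <;> omega
    · -- Case 2 : impossible
      exfalso
      push_neg at hcase
      -- no color at v occurs internally
      have hm0 : ∀ x ∈ R, ∀ z ∈ R, x ∉ colorsOn χ (A z) := by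
        intro x hx z hz hmem
        have h1 := (hcase x hx).1
        have := hmmpos x z hz hmem
        omega
      -- internal colors are never in R
      have hint : ∀ z ∈ R, ∀ a ∈ A z, ∀ b ∈ A z, a ≠ b → χ a b ∉ R := by
        intro z hz a ha b hb hab hmemR
        have haT := (hAmem z a ha).2
        have hbT := (hAmem z b hb).2
        have hsame : χ v a = χ v b := by rw [(hAmem z a ha).1, (hAmem z b hb).1]
        have hmem := hsamepart a haT b hbT hab hsame
        have hza : χ v a = z := (hAmem z a ha).1
        rw [hza] at hmem
        exact hm0 (χ a b) hmemR z hz hmem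
      -- representatives
      have hrex : ∀ x, ∃ w, x ∈ R → w ∈ A x := by
        intro x
        by_cases hx : x ∈ R
        · obtain ⟨w, hw⟩ := hRne x hx
          exact ⟨w, fun _ => hw⟩
        · exact ⟨v, fun h => absurd h hx⟩
      choose r hr using hrex
      have hrA : ∀ x ∈ R, r x ∈ A x := fun x hx => hr x hx
      have hrχ : ∀ x ∈ R, χ v (r x) = x := fun x hx => (hAmem x (r x) (hrA x hx)).1
      have hrT : ∀ x ∈ R, r x ∈ T := fun x hx => (hAmem x (r x) (hrA x hx)).2
      have hrne : ∀ x ∈ R, ∀ y ∈ R, x ≠ y → r x ≠ r y := by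
        intro x hx y hy hxy h
        exact hxy (by rw [← hrχ x hx, ← hrχ y hy, h])
      -- the tournament
      set beats : β → β → Prop := fun i j => χ (r i) (r j) = i with hbeats
      have htot : ∀ i ∈ R, ∀ j ∈ R, i ≠ j → beats i j ∨ beats j i := by
        intro i hi j hj hij
        have h := hbet (r i) (hrT i hi) (r j) (hrT j hj)
          (by rw [hrχ i hi, hrχ j hj]; exact hij)
        rw [hrχ i hi, hrχ j hj] at h
        rcases h with h | h
        · exact Or.inl h
        · exact Or.inr (show χ (r j) (r i) = j by rw [hg.1 (r j) (r i)]; exact h)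
      have hasym : ∀ i ∈ R, ∀ j ∈ R, i ≠ j → beats i j → ¬ beats j i := by
        intro i hi j hj hij h1 h2
        have h1' : χ (r i) (r j) = i := h1
        have h2' : χ (r j) (r i) = j := h2
        exact hij (h1'.symm.trans ((hg.1 (r i) (r j)).trans h2'))
      have htrans : ∀ i ∈ R, ∀ j ∈ R, ∀ k ∈ R, i ≠ j → j ≠ k → i ≠ k →
          beats i j → beats j k → beats i k := by
        intro i hi j hj k hk hij hjk hik h1 h2
        have h3 := hbet (r i) (hrT i hi) (r k) (hrT k hk)
          (by rw [hrχ i hi, hrχ k hk]; exact hik)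
        rw [hrχ i hi, hrχ k hk] at h3
        rcases h3 with h3 | h3
        · exact h3
        · exfalso
          have hrij := hrne i hi j hj hij
          have hrik := hrne i hi k hk hik
          have hrjk := hrne j hj k hk hjk
          have := hg.2 (r i) (r j) (r k) hrij hrik hrjk
          have h1' : χ (r i) (r j) = i := h1
          have h2' : χ (r j) (r k) = j := h2
          apply this
          refine ⟨?_, ?_, ?_⟩
          · rw [h1', h3]; exact hik
          · rw [h1', h2']; exact hij
          · rw [h3, h2']; exact fun hh => hjk hh.symm
      have hRneR : R.Nonempty := Finset.card_pos.mp (by omega)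
      obtain ⟨l, hl, hlos⟩ := exists_loser beats R hRneR htot hasym htrans
      -- block constancy (columns)
      have hcolconst : ∀ i ∈ R, ∀ j ∈ R, i ≠ j → ∀ a ∈ A i, ∀ a' ∈ A i, ∀ b ∈ A j,
          χ a b = χ a' b := by
        intro i hi j hj hij a ha a' ha' b hb
        by_cases haa : a = a'
        · rw [haa]
        · have haT := (hAmem i a ha).2
          have ha'T := (hAmem i a' ha').2
          have hbT := (hAmem j b hb).2
          have hvai : χ v a = i := (hAmem i a ha).1
          have hva'i : χ v a' = i := (hAmem i a' ha').1
          have hvbj : χ v b = j := (hAmem j b hb).1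
          have h1 : χ a b = i ∨ χ a b = j := by
            have := hbet a haT b hbT (by rw [hvai, hvbj]; exact hij)
            rwa [hvai, hvbj] at this
          have h2 : χ a' b = i ∨ χ a' b = j := by
            have := hbet a' ha'T b hbT (by rw [hva'i, hvbj]; exact hij)
            rwa [hva'i, hvbj] at this
          have hz : χ a a' ∉ R := hint i hi a ha a' ha' haa
          have hzi : χ a a' ≠ i := fun h => hz (h ▸ hi)
          have hzj : χ a a' ≠ j := fun h => hz (h ▸ hj)
          by_contra hne
          have hab : a ≠ b := fun h => hij (by rw [← hvai, ← hvbj, h])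
          have ha'b : a' ≠ b := fun h => hij (by rw [← hva'i, ← hvbj, h])
          have := hg.2 a a' b haa hab ha'b
          apply this
          refine ⟨?_, ?_, hne⟩
          · rcases h1 with h | h <;> rw [h]
            · exact hzi
            · exact hzj
          · rcases h2 with h | h <;> rw [h]
            · exact hzi
            · exact hzj
      have hblock : ∀ i ∈ R, ∀ j ∈ R, i ≠ j → ∀ a ∈ A i, ∀ b ∈ A j,
          χ a b = χ (r i) (r j) := by
        intro i hi j hj hij a ha b hb
        have h1 : χ a b = χ (r i) b := hcolconst i hi j hj hij a ha (r i) (hrA i hi) b hb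
        have h2 : χ b (r i) = χ (r j) (r i) :=
          hcolconst j hj i hi (Ne.symm hij) b hb (r j) (hrA j hj) (r i) (hrA i hi)
        rw [h1, hg.1 (r i) b, h2, hg.1 (r j) (r i)]
      -- the loser is a star at v : contradiction
      apply (hcase l hl).2.2
      refine mem_starsOn.mpr ⟨hRsubC hl, v, hv, ?_⟩
      intro a ha b hb hab hcab
      by_cases hav : a = v
      · exact Or.inl hav
      by_cases hbv : b = v
      · exact Or.inr hbv
      exfalso
      have haT : a ∈ T := Finset.mem_erase.mpr ⟨hav, ha⟩
      have hbT : b ∈ T := Finset.mem_erase.mpr ⟨hbv, hb⟩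
      have hiR := hRof a haT
      have hjR := hRof b hbT
      by_cases hsame : χ v a = χ v b
      · have haA : a ∈ A (χ v a) := hmemA a haT
        have hbA : b ∈ A (χ v a) := Finset.mem_filter.mpr ⟨hbT, hsame.symm⟩
        exact hint (χ v a) hiR a haA b hbA hab (hcab ▸ hl)
      · rcases hbet a haT b hbT hsame with h | h
        · -- χ a b = χ v a, so χ v a = l
          have hil : χ v a = l := by rw [← h]; exact hcab
          have hjl : χ v b ≠ l := by rw [← hil]; exact fun hh => hsame hh.symm
          have hblk := hblock (χ v a) hiR (χ v b) hjR hsame a (hmemA a haT)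
            b (hmemA b hbT)
          have hlosj : χ (r (χ v b)) (r l) = χ v b := hlos (χ v b) hjR hjl
          rw [hil] at hblk
          rw [hg.1 (r l) (r (χ v b))] at hblk
          rw [hlosj] at hblk
          rw [hcab] at hblk
          exact hjl hblk.symm
        · -- χ a b = χ v b, so χ v b = l
          have hjl : χ v b = l := by rw [← h]; exact hcab
          have hil : χ v a ≠ l := by rw [← hjl]; exact hsame
          have hblk := hblock (χ v a) hiR (χ v b) hjR hsame a (hmemA a haT)
            b (hmemA b hbT)
          have hlosi : χ (r (χ v a)) (r l) = χ v a := hlos (χ v a) hiR hil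
          rw [hjl] at hblk
          rw [hlosi] at hblk
          rw [hcab] at hblk
          exact hil hblk.symm
  -- summed inequality over colors at v
  obtain ⟨x₀, hx₀, hwit⟩ := hwitness
  have hRsum : R.card + 1 + 2 * (∑ x ∈ R, ss x)
      ≤ (∑ x ∈ R, if 2 ≤ (A x).card then 1 else 0)
        + 2 * (R.filter (fun y => y ∈ starsOn χ S)).card + 4 * (∑ x ∈ R, mm x) := by
    set f : β → ℕ := fun x => 1 + 2 * ss x with hf
    set g : β → ℕ := fun x => (if 2 ≤ (A x).card then 1 else 0)
      + (if x ∈ starsOn χ S then 2 else 0) + 4 * mm x with hgdef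
    have hsums : (∑ x ∈ R, f x) + 1 ≤ ∑ x ∈ R, g x := by
      rw [← Finset.add_sum_erase R f hx₀, ← Finset.add_sum_erase R g hx₀]
      have hle : ∑ x ∈ R.erase x₀, f x ≤ ∑ x ∈ R.erase x₀, g x :=
        Finset.sum_le_sum (fun x hx => hRpt x (Finset.mem_of_mem_erase hx))
      have hfx : f x₀ = 1 + 2 * ss x₀ := rfl
      have hgx : g x₀ = (if 2 ≤ (A x₀).card then 1 else 0)
        + (if x₀ ∈ starsOn χ S then 2 else 0) + 4 * mm x₀ := rfl
      omega
    have hfs : ∑ x ∈ R, f x = R.card + 2 * (∑ x ∈ R, ss x) := by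
      rw [hf, Finset.sum_add_distrib, Finset.sum_const, smul_eq_mul, mul_one, Finset.mul_sum]
    have hgs : ∑ x ∈ R, g x = (∑ x ∈ R, if 2 ≤ (A x).card then 1 else 0)
        + 2 * (R.filter (fun y => y ∈ starsOn χ S)).card + 4 * (∑ x ∈ R, mm x) := by
      rw [hgdef, Finset.sum_add_distrib, Finset.sum_add_distrib]
      have hb : (∑ x ∈ R, if x ∈ starsOn χ S then 2 else 0)
          = 2 * (R.filter (fun y => y ∈ starsOn χ S)).card := by
        rw [Finset.card_filter, Finset.mul_sum]
        apply Finset.sum_congr rfl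
        intro y _
        split_ifs <;> simp
      rw [hb, Finset.mul_sum]
    rw [hfs, hgs] at hsums
    omega
  -- splitting the sums and star counts over R and I
  have hMsplit : ∑ y ∈ C, mm y = ∑ y ∈ R, mm y + ∑ y ∈ I, mm y := by
    rw [← hUnion, Finset.sum_union hdisj]
  have hSsplit : ∑ y ∈ C, ss y = ∑ y ∈ R, ss y + ∑ y ∈ I, ss y := by
    rw [← hUnion, Finset.sum_union hdisj]
  have hstsplit : (R.filter (fun y => y ∈ starsOn χ S)).card
      + (I.filter (fun y => y ∈ starsOn χ S)).card = (starsOn χ S).card := by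
    rw [← Finset.card_union_of_disjoint (Finset.disjoint_filter_filter hdisj),
      ← Finset.filter_union, hUnion, Finset.filter_mem_eq_inter,
      Finset.inter_eq_right.mpr (starsOn_subset)]
  -- final arithmetic
  omega

end Main

section Application

/-- Upper bound: any Gallai coloring of `K_{p+1}` with `k` colors where `3p ≤ 4k`
has `p` vertices spanning at most `k-1` colors. -/
lemma exists_good_subset (k p : ℕ) (hk1 : 1 ≤ k) (hp1 : 1 ≤ p) (hpk : 3 * p ≤ 4 * k)
    (χ : Fin (p+1) → Fin (p+1) → Fin k) (hg : IsGallai χ) :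
    ∃ S : Finset (Fin (p+1)), S.card = p ∧ (colorsOn χ S).card ≤ k - 1 := by
  have hcolbound : (colorsOn χ (univ : Finset (Fin (p+1)))).card ≤ k := by
    have := Finset.card_le_univ (colorsOn χ (univ : Finset (Fin (p+1))))
    simpa using this
  by_cases hst : (starsOn χ (univ : Finset (Fin (p+1)))).Nonempty
  · obtain ⟨x, hx⟩ := hst
    obtain ⟨hxC, v, _, hcov⟩ := mem_starsOn.mp hx
    refine ⟨univ.erase v, ?_, ?_⟩
    · rw [Finset.card_erase_of_mem (Finset.mem_univ v)]
      simp
    · have hsub : colorsOn χ (univ.erase v) ⊆ (colorsOn χ (univ : Finset (Fin (p+1)))).erase x := by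
        intro y hy
        refine Finset.mem_erase.mpr ⟨?_, colorsOn_mono (Finset.erase_subset _ _) hy⟩
        rintro rfl
        obtain ⟨a, ha, b, hb, hab, hcab⟩ := mem_colorsOn.mp hy
        rcases hcov a (Finset.mem_univ a) b (Finset.mem_univ b) hab hcab with rfl | rfl
        · exact (Finset.mem_erase.mp ha).1 rfl
        · exact (Finset.mem_erase.mp hb).1 rfl
      have h1 := Finset.card_le_card hsub
      rw [Finset.card_erase_of_mem hxC] at h1
      omega
  · have hst0 : (starsOn χ (univ : Finset (Fin (p+1)))).card = 0 := by
      rw [Finset.not_nonempty_iff_eq_empty.mp hst, Finset.card_empty]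
    by_cases hcol : (colorsOn χ (univ : Finset (Fin (p+1)))).card ≤ k - 1
    · refine ⟨univ.erase ⟨0, by omega⟩, ?_, ?_⟩
      · rw [Finset.card_erase_of_mem (Finset.mem_univ _)]
        simp
      · exact le_trans (Finset.card_le_card (colorsOn_mono (Finset.erase_subset _ _))) hcol
    · exfalso
      have hbound := gallai_star_bound χ hg (p+1) univ (by simp) (by omega)
      rw [hst0] at hbound
      omega

end Application

theorem gallaiNum_q_eq_k_sub_one (c p k : ℕ) (hc : 1 ≤ c)
    (hp : 2 * (8 + c) ^ (c + 1) - 1 ≤ p) (hkc : k = p - c) :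
    gallaiNum k (k - 1) p = p + 1 ∧
    ∀ col : Fin (p + 1) → Fin (p + 1) → Fin (p - c), IsGallai col →
      ∃ S : Finset (Fin (p + 1)), S.card = p ∧ (colorsOn col S).card ≤ p - c - 1 := by
  subst hkc
  -- numeric facts
  have hsq : (8 + c) ^ 2 ≤ (8 + c) ^ (c + 1) := Nat.pow_le_pow_right (by omega) (by omega)
  have hsq2 : (8 + c) ^ 2 = c * c + 16 * c + 64 := by ring
  have hpbig : 4 * c ≤ p ∧ c + 2 ≤ p := by
    have h0 : 0 ≤ c * c := Nat.zero_le _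
    omega
  have hk1 : 1 ≤ p - c := by omega
  have hp1 : 1 ≤ p := by omega
  have hpk : 3 * p ≤ 4 * (p - c) := by omega
  have main2 : ∀ col : Fin (p + 1) → Fin (p + 1) → Fin (p - c), IsGallai col →
      ∃ S : Finset (Fin (p + 1)), S.card = p ∧ (colorsOn col S).card ≤ p - c - 1 :=
    fun col hcol => exists_good_subset (p - c) p hk1 hp1 hpk col hcol
  refine ⟨?_, main2⟩
  rw [gallaiNum]
  apply IsLeast.csInf_eq
  constructor
  · exact ⟨Nat.succ_pos p, main2⟩
  · rintro m ⟨hm0, hmall⟩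
    by_contra hlt
    push_neg at hlt
    by_cases hmp : m = p
    · rw [hmp] at hmall
      -- the min-coloring of K_p uses p - c colors on every p-subset
      set χ₀ : Fin p → Fin p → Fin (p - c) :=
        fun i j => ⟨min (min i.1 j.1) (p - c - 1), by omega⟩ with hχ₀
      have hg0 : IsGallai χ₀ := by
        constructor
        · intro a b
          apply Fin.ext
          simp only [hχ₀]
          omega
        · intro a b d _ _ _
          simp only [hχ₀, ne_eq, Fin.mk.injEq]
          omega
      obtain ⟨S, hScard, hScol⟩ := hmall χ₀ hg0
      have hSuniv : S = univ := Finset.eq_univ_of_card S (by simp [hScard])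
      have hall : (univ : Finset (Fin (p - c))) ⊆ colorsOn χ₀ S := by
        intro t _
        rw [hSuniv]
        apply mem_colorsOn.mpr
        have ht := t.2
        refine ⟨⟨t.1, by omega⟩, Finset.mem_univ _, ⟨p - 1, by omega⟩, Finset.mem_univ _, ?_, ?_⟩
        · intro hh
          have := congrArg Fin.val hh
          simp only at this
          omega
        · apply Fin.ext
          simp only [hχ₀]
          omega
      have hge := Finset.card_le_card hall
      simp only [Finset.card_univ, Fintype.card_fin] at hge
      omega
    · have hmlt : m < p := by omega
      obtain ⟨S, hScard, _⟩ := hmall (fun _ _ => ⟨0, by omega⟩)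
        ⟨fun _ _ => rfl, fun _ _ _ _ _ _ h => h.1 rfl⟩
      have := Finset.card_le_univ S
      simp only [Finset.card_univ, Fintype.card_fin] at this
      omega
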